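/- Let ε ∈ (0,1), Δ > 0, and T > 0 with T·Δ² ≥ 1; write L = log(T·Δ²). Let Z₁, Z₂, … be i.i.d. real random variables such that Zᵢ − Δ′ is 1-subgaussian for some constant Δ′ ≥ (1−ε)Δ, and let S′ₙ = Z₁ + ⋯ + Zₙ. Then for every x > 0, with n_x = (L + x)/(2(1−ε)²Δ²), one has P(S′_{⌈n_x⌉} ≤ L/(2(1−ε)Δ)) ≤ exp(−x²/(4(L + x))). -/

import Mathlib

open MeasureTheory ProbabilityTheory Real
open scoped ENNReal

/-!
Centre the partial sum at `n Δ'` and apply Hoeffding's inequality to the lower tail: since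
`Δ' ≥ a := (1 - ε) Δ`, the event has probability at most `exp (-(n a - L / (2a))² / (2n))`.
With `u = 2 a² n ≥ L + x` this exponent equals `(u - L)² / (4u)`, which is increasing in
`u ≥ L` and hence at least `x² / (4 (L + x))`.
-/

/-- `W` is 1-subgaussian (mean-zero form): `E[exp(λW)] ≤ exp(λ²/2)` for all
`λ ∈ ℝ` (with the integrability of the moment generating function). -/
def IsOneSubgaussianMGF {Ω : Type*} [MeasurableSpace Ω] (μ : Measure Ω) (W : Ω → ℝ) : Prop :=
  ∀ l : ℝ, Integrable (fun ω => Real.exp (l * W ω)) μ ∧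
    (∫ ω, Real.exp (l * W ω) ∂μ) ≤ Real.exp (l ^ 2 / 2)

section Subgaussian

variable {Ω : Type*} [MeasurableSpace Ω] {μ : Measure Ω}

lemma IsOneSubgaussianMGF.hasSubgaussianMGF {W : Ω → ℝ} (h : IsOneSubgaussianMGF μ W) :
    HasSubgaussianMGF W 1 μ where
  integrable_exp_mul t := (h t).1
  mgf_le t := by simpa [mgf] using (h t).2

lemma IsOneSubgaussianMGF.neg {W : Ω → ℝ} (h : IsOneSubgaussianMGF μ W) :
    IsOneSubgaussianMGF μ (fun ω => -W ω) := fun l => by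
  simpa [neg_mul, mul_neg] using h (-l)

lemma measure_sum_range_le_sub_le [IsFiniteMeasure μ] {Z : ℕ → Ω → ℝ} (hindep : iIndepFun Z μ)
    {m : ℝ} (hsub : ∀ i, IsOneSubgaussianMGF μ (fun ω => Z i ω - m)) (n : ℕ) {t : ℝ}
    (ht : 0 ≤ t) :
    μ {ω | ∑ i ∈ Finset.range n, Z i ω ≤ n * m - t} ≤ ENNReal.ofReal (exp (-t ^ 2 / (2 * n))) := by
  have hindep' : iIndepFun (fun i ω => m - Z i ω) μ :=
    hindep.comp (fun _ y => m - y) fun _ => measurable_const.sub measurable_id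
  have hsub' i (_ : i < n) : HasSubgaussianMGF (fun ω => m - Z i ω) 1 μ := by
    simpa using (hsub i).neg.hasSubgaussianMGF
  have hset : {ω | ∑ i ∈ Finset.range n, Z i ω ≤ n * m - t}
      = {ω | t ≤ ∑ i ∈ Finset.range n, (m - Z i ω)} := by
    ext ω
    simp only [Set.mem_ofPred_eq, Finset.sum_sub_distrib, Finset.sum_const, Finset.card_range,
      nsmul_eq_mul]
    constructor <;> intro h <;> linarith
  rw [hset, ← ofReal_measureReal]
  gcongr
  simpa using HasSubgaussianMGF.measure_sum_range_ge_le_of_iIndepFun hindep' hsub' ht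

end Subgaussian

lemma sub_sq_div_le_sub_sq_div {L u v : ℝ} (hL : 0 ≤ L) (hLv : L < v) (hvu : v ≤ u) :
    (v - L) ^ 2 / v ≤ (u - L) ^ 2 / u := by
  have hv : 0 < v := hL.trans_lt hLv
  rw [div_le_div_iff₀ hv (hv.trans_le hvu)]
  nlinarith [mul_nonneg (sub_nonneg.2 hvu) (mul_nonneg (sub_nonneg.2 hLv.le) (add_nonneg hv.le hL)),
    mul_nonneg (mul_nonneg (sub_nonneg.2 hvu) (sub_nonneg.2 hvu)) hv.le]

lemma sq_div_le_chernoff_exponent {a L N x : ℝ} (ha : 0 < a) (hL : 0 ≤ L) (hx : 0 < x)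
    (hN : L + x ≤ 2 * a ^ 2 * N) :
    x ^ 2 / (4 * (L + x)) ≤ (N * a - L / (2 * a)) ^ 2 / (2 * N) := by
  have hN0 : 0 < N := by nlinarith
  calc x ^ 2 / (4 * (L + x)) = (L + x - L) ^ 2 / (L + x) / 4 := by
        rw [add_sub_cancel_left, div_div, mul_comm]
    _ ≤ (2 * a ^ 2 * N - L) ^ 2 / (2 * a ^ 2 * N) / 4 :=
        div_le_div_of_nonneg_right (sub_sq_div_le_sub_sq_div hL (by linarith) hN) zero_le_four
    _ = (N * a - L / (2 * a)) ^ 2 / (2 * N) := by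
        field_simp
        ring

theorem stmt7_general {Ω : Type*} [MeasurableSpace Ω] (μ : Measure Ω) [IsProbabilityMeasure μ]
    (Z : ℕ → Ω → ℝ)
    (hindep : iIndepFun Z μ)
    (ε Δ T : ℝ) (hε : ε ∈ Set.Ioo (0 : ℝ) 1) (hΔ : 0 < Δ)
    (hTΔ : 1 ≤ T * Δ ^ 2)
    (Δ' : ℝ) (hΔ' : (1 - ε) * Δ ≤ Δ')
    (hsub : ∀ i, IsOneSubgaussianMGF μ (fun ω => Z i ω - Δ'))
    (L : ℝ) (hL : L = Real.log (T * Δ ^ 2))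
    (x : ℝ) (hx : 0 < x) :
    μ {ω | ∑ i ∈ Finset.range ⌈(L + x) / (2 * (1 - ε) ^ 2 * Δ ^ 2)⌉₊, Z i ω
        ≤ L / (2 * (1 - ε) * Δ)} ≤
      ENNReal.ofReal (Real.exp (-(x ^ 2) / (4 * (L + x)))) := by
  set a := (1 - ε) * Δ
  have ha : 0 < a := mul_pos (by linarith [hε.2]) hΔ
  have hL0 : 0 ≤ L := hL ▸ Real.log_nonneg hTΔ
  set n := ⌈(L + x) / (2 * (1 - ε) ^ 2 * Δ ^ 2)⌉₊
  have hn : L + x ≤ 2 * a ^ 2 * n := by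
    rw [show 2 * a ^ 2 = 2 * (1 - ε) ^ 2 * Δ ^ 2 by ring, ← div_le_iff₀' (by nlinarith)]
    exact Nat.le_ceil _
  have hmargin : L / (2 * a) ≤ n * a := by
    rw [div_le_iff₀ (by positivity)]
    nlinarith
  have hexp := sq_div_le_chernoff_exponent ha hL0 hx hn
  have hn0 : (0 : ℝ) < n := by nlinarith
  calc μ {ω | ∑ i ∈ Finset.range n, Z i ω ≤ L / (2 * (1 - ε) * Δ)}
      = μ {ω | ∑ i ∈ Finset.range n, Z i ω ≤ n * Δ' - (n * Δ' - L / (2 * a))} := by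
        rw [sub_sub_cancel, mul_assoc]
    _ ≤ ENNReal.ofReal (exp (-(n * Δ' - L / (2 * a)) ^ 2 / (2 * n))) :=
        measure_sum_range_le_sub_le hindep hsub n (by nlinarith)
    _ ≤ ENNReal.ofReal (exp (-(x ^ 2) / (4 * (L + x)))) := by
        gcongr ENNReal.ofReal (exp ?_)
        rw [neg_div, neg_div, neg_le_neg_iff]
        exact hexp.trans (by gcongr)

/-- Let `ε ∈ (0,1)`, `Δ > 0`, `T > 0`, `T·Δ² ≥ 1`, `L = log(T·Δ²)`.  Let `Z₁, Z₂, …` be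
i.i.d. with `Zᵢ − Δ′` 1-subgaussian for some constant `Δ′ ≥ (1−ε)Δ`, and
`S′ₙ = Z₁ + ⋯ + Zₙ`.  For every `x > 0`, with `n_x = (L + x)/(2(1−ε)²Δ²)`,
`P(S′_{⌈n_x⌉} ≤ L/(2(1−ε)Δ)) ≤ exp(−x²/(4(L + x)))`. -/
theorem stmt7 {Ω : Type*} [MeasurableSpace Ω] (μ : Measure Ω) [IsProbabilityMeasure μ]
    (Z : ℕ → Ω → ℝ) (hmeas : ∀ i, Measurable (Z i))
    (hindep : iIndepFun Z μ)
    (hident : ∀ i, IdentDistrib (Z i) (Z 0) μ μ)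
    (ε Δ T : ℝ) (hε : ε ∈ Set.Ioo (0 : ℝ) 1) (hΔ : 0 < Δ) (hT : 0 < T)
    (hTΔ : 1 ≤ T * Δ ^ 2)
    (Δ' : ℝ) (hΔ' : (1 - ε) * Δ ≤ Δ')
    (hsub : ∀ i, IsOneSubgaussianMGF μ (fun ω => Z i ω - Δ'))
    (L : ℝ) (hL : L = Real.log (T * Δ ^ 2))
    (x : ℝ) (hx : 0 < x) :
    μ {ω | ∑ i ∈ Finset.range ⌈(L + x) / (2 * (1 - ε) ^ 2 * Δ ^ 2)⌉₊, Z i ω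
        ≤ L / (2 * (1 - ε) * Δ)} ≤
      ENNReal.ofReal (Real.exp (-(x ^ 2) / (4 * (L + x)))) :=
  stmt7_general μ Z hindep ε Δ T hε hΔ hTΔ Δ' hΔ' hsub L hL x hx
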